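/- arXiv:2001.04968 — 2 statements merged into one kernel-verified Lean document; each statement's English description precedes it below -/
import Mathlib

section
/- Let X ∈ ℝ^{n×p} be a design matrix with rank(X) = p, let H = X(XᵀX)⁻¹Xᵀ, H_v = H ⊗ I_M, and let D_v = I_n ⊗ D for an incidence matrix D ∈ ℝ^{M×m}. If θ̂ ∈ ℝ^{nM} is the optimal solution of the constrained problem (CP): minimize ½‖vec(Yᵀ) − θ‖² + λ‖D_vᵀθ‖₁ subject to (I − H_v)θ = 0, and Γ̂ ∈ ℝ^{p×M} is the optimal solution of the problem (P): minimize ½‖Y − XΓ‖_F² + λ‖XΓD‖₁, then Γ̂ = (XᵀX)⁻¹Xᵀ · mat(θ̂), where mat(θ̂) is the n×M matrix whose i-th row is the i-th block of length M of θ̂. -/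
open Matrix Kronecker BigOperators

/-- Squared Euclidean norm of a finitely indexed real vector. -/
noncomputable def sqnorm {ι : Type*} [Fintype ι] (v : ι → ℝ) : ℝ := ∑ i, v i ^ 2

/-- Entrywise ℓ¹ norm of a finitely indexed real vector. -/
noncomputable def l1norm {ι : Type*} [Fintype ι] (v : ι → ℝ) : ℝ := ∑ i, |v i|

/-- `D` is the signed incidence matrix of an undirected graph: each column has exactly
one `+1` entry, one `-1` entry (at distinct vertices) and zeros elsewhere. -/
def IsIncidence {M m : ℕ} (D : Matrix (Fin M) (Fin m) ℝ) : Prop :=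
  ∀ j : Fin m, ∃ i₁ i₂ : Fin M, i₁ ≠ i₂ ∧ D i₁ j = 1 ∧ D i₂ j = -1 ∧
    ∀ i : Fin M, i ≠ i₁ → i ≠ i₂ → D i j = 0

lemma hv_mulVec {n M : ℕ} (H : Matrix (Fin n) (Fin n) ℝ) (θ : Fin n × Fin M → ℝ)
    (i : Fin n) (j : Fin M) :
    (H ⊗ₖ (1 : Matrix (Fin M) (Fin M) ℝ)).mulVec θ (i, j) = ∑ i', H i i' * θ (i', j) := by
  simp only [Matrix.mulVec, dotProduct, Fintype.sum_prod_type, kroneckerMap_apply,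
    Matrix.one_apply, mul_ite, mul_one, mul_zero, ite_mul, zero_mul]
  simp

lemma dv_mulVec {n M m : ℕ} (D : Matrix (Fin M) (Fin m) ℝ) (θ : Fin n × Fin M → ℝ)
    (i : Fin n) (k : Fin m) :
    ((1 : Matrix (Fin n) (Fin n) ℝ) ⊗ₖ D)ᵀ.mulVec θ (i, k) = ∑ j, D j k * θ (i, j) := by
  simp only [Matrix.mulVec, dotProduct, Fintype.sum_prod_type, Matrix.transpose_apply,
    kroneckerMap_apply, Matrix.one_apply, mul_ite, mul_one, mul_zero, ite_mul, zero_mul]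
  simp

lemma isUnit_of_rank_eq {p : ℕ} (G : Matrix (Fin p) (Fin p) ℝ) (h : G.rank = p) : IsUnit G := by
  rw [← Matrix.mulVec_surjective_iff_isUnit]
  have : LinearMap.range G.mulVecLin = ⊤ := by
    apply Submodule.eq_top_of_finrank_eq
    rw [← Matrix.rank, h]
    simp [Module.finrank_pi]
  intro v
  obtain ⟨w, hw⟩ := LinearMap.range_eq_top.mp this v
  exact ⟨w, hw⟩

/-- Lemma 1 of the paper: the optimizer `Γ̂` of the penalized problem (P) equals
`(XᵀX)⁻¹ Xᵀ mat(θ̂)`, where `θ̂` optimizes the constrained problem (CP). -/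
theorem solution_relationship {n p M m : ℕ}
    (X : Matrix (Fin n) (Fin p) ℝ) (Y : Matrix (Fin n) (Fin M) ℝ)
    (D : Matrix (Fin M) (Fin m) ℝ) (hD : IsIncidence D)
    (lam : ℝ) (hlam : 0 < lam) (hrank : X.rank = p)
    (H : Matrix (Fin n) (Fin n) ℝ) (hH : H = X * (Xᵀ * X)⁻¹ * Xᵀ)
    (Hv : Matrix (Fin n × Fin M) (Fin n × Fin M) ℝ)
    (hHv : Hv = H ⊗ₖ (1 : Matrix (Fin M) (Fin M) ℝ))
    (Dv : Matrix (Fin n × Fin M) (Fin n × Fin m) ℝ)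
    (hDv : Dv = (1 : Matrix (Fin n) (Fin n) ℝ) ⊗ₖ D)
    -- θ̂ is an optimal solution of (CP)
    (θhat : Fin n × Fin M → ℝ)
    (hθfeas : ((1 : Matrix (Fin n × Fin M) (Fin n × Fin M) ℝ) - Hv).mulVec θhat = 0)
    (hθopt : ∀ θ : Fin n × Fin M → ℝ,
      ((1 : Matrix (Fin n × Fin M) (Fin n × Fin M) ℝ) - Hv).mulVec θ = 0 →
      (1 / 2) * sqnorm (fun ij : Fin n × Fin M => Y ij.1 ij.2 - θhat ij)
          + lam * l1norm (Dvᵀ.mulVec θhat)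
        ≤ (1 / 2) * sqnorm (fun ij : Fin n × Fin M => Y ij.1 ij.2 - θ ij)
          + lam * l1norm (Dvᵀ.mulVec θ))
    -- Γ̂ is an optimal solution of (P)
    (Γhat : Matrix (Fin p) (Fin M) ℝ)
    (hΓopt : ∀ Γ : Matrix (Fin p) (Fin M) ℝ,
      (1 / 2) * sqnorm (fun ij : Fin n × Fin M => Y ij.1 ij.2 - (X * Γhat) ij.1 ij.2)
          + lam * l1norm (fun ik : Fin n × Fin m => (X * Γhat * D) ik.1 ik.2)
        ≤ (1 / 2) * sqnorm (fun ij : Fin n × Fin M => Y ij.1 ij.2 - (X * Γ) ij.1 ij.2)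
          + lam * l1norm (fun ik : Fin n × Fin m => (X * Γ * D) ik.1 ik.2)) :
    Γhat = (Xᵀ * X)⁻¹ * Xᵀ * Matrix.of (fun i j => θhat (i, j)) := by
  classical
  -- invertibility of XᵀX
  have hG : IsUnit (Xᵀ * X) := by
    apply isUnit_of_rank_eq
    rw [Matrix.rank_transpose_mul_self, hrank]
  have hdet : IsUnit (Xᵀ * X).det := (Matrix.isUnit_iff_isUnit_det _).mp hG
  have hinv : (Xᵀ * X)⁻¹ * (Xᵀ * X) = 1 := Matrix.nonsing_inv_mul _ hdet
  have hHX : H * X = X := by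
    rw [hH, Matrix.mul_assoc (X * (Xᵀ * X)⁻¹) Xᵀ X, Matrix.mul_assoc X (Xᵀ * X)⁻¹ (Xᵀ * X),
      hinv, Matrix.mul_one]
  set Θ : Matrix (Fin n) (Fin M) ℝ := Matrix.of (fun i j => θhat (i, j)) with hΘ
  -- feasibility of θhat means H • mat(θhat) = mat(θhat)
  have hfix : ∀ ij : Fin n × Fin M, Hv.mulVec θhat ij = θhat ij := by
    intro ij
    have h := congrFun hθfeas ij
    simp only [Matrix.sub_mulVec, Matrix.one_mulVec, Pi.sub_apply, Pi.zero_apply,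
      sub_eq_zero] at h
    exact h.symm
  have hHΘ : H * Θ = Θ := by
    ext i j
    rw [Matrix.mul_apply]
    have := hfix (i, j)
    rw [hHv, hv_mulVec] at this
    simpa [hΘ] using this
  set Γ₀ : Matrix (Fin p) (Fin M) ℝ := (Xᵀ * X)⁻¹ * Xᵀ * Θ with hΓ₀
  have hXΓ₀ : X * Γ₀ = Θ := by
    rw [hΓ₀, ← Matrix.mul_assoc, ← Matrix.mul_assoc, ← hH, hHΘ]
  -- objective of (P)
  set P : Matrix (Fin p) (Fin M) ℝ → ℝ := fun Γ =>
    (1 / 2) * sqnorm (fun ij : Fin n × Fin M => Y ij.1 ij.2 - (X * Γ) ij.1 ij.2)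
      + lam * l1norm (fun ik : Fin n × Fin m => (X * Γ * D) ik.1 ik.2) with hP
  -- for each Γ, vec(XΓ) is feasible for (CP) and has the same objective value
  have hfeasΓ : ∀ Γ : Matrix (Fin p) (Fin M) ℝ,
      ((1 : Matrix (Fin n × Fin M) (Fin n × Fin M) ℝ) - Hv).mulVec
        (fun ij => (X * Γ) ij.1 ij.2) = 0 := by
    intro Γ
    funext ij
    obtain ⟨i, j⟩ := ij
    have h1 : Hv.mulVec (fun ij => (X * Γ) ij.1 ij.2) (i, j) = (X * Γ) i j := by
      rw [hHv, hv_mulVec]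
      have : (H * (X * Γ)) i j = (X * Γ) i j := by
        rw [← Matrix.mul_assoc, hHX]
      rw [← this, Matrix.mul_apply]
    simp [Matrix.sub_mulVec, Matrix.one_mulVec, h1]
  have hDvΓ : ∀ Γ : Matrix (Fin p) (Fin M) ℝ,
      Dvᵀ.mulVec (fun ij => (X * Γ) ij.1 ij.2)
        = fun ik : Fin n × Fin m => (X * Γ * D) ik.1 ik.2 := by
    intro Γ
    funext ik
    obtain ⟨i, k⟩ := ik
    rw [hDv, dv_mulVec, Matrix.mul_apply]
    simp [mul_comm]
  -- objective of (CP) at θhat equals P Γ₀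
  have hθeq : (fun ij : Fin n × Fin M => θhat ij) = fun ij => (X * Γ₀) ij.1 ij.2 := by
    funext ij
    rw [hXΓ₀]
    rfl
  have hDvθ : Dvᵀ.mulVec θhat = fun ik : Fin n × Fin m => (X * Γ₀ * D) ik.1 ik.2 := by
    rw [show θhat = fun ij => (X * Γ₀) ij.1 ij.2 from hθeq]
    exact hDvΓ Γ₀
  -- P Γ₀ ≤ P Γhat
  have hle1 : P Γ₀ ≤ P Γhat := by
    have := hθopt (fun ij => (X * Γhat) ij.1 ij.2) (hfeasΓ Γhat)
    rw [hDvθ, hDvΓ Γhat] at this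
    calc P Γ₀ = (1 / 2) * sqnorm (fun ij : Fin n × Fin M => Y ij.1 ij.2 - θhat ij)
          + lam * l1norm (fun ik : Fin n × Fin m => (X * Γ₀ * D) ik.1 ik.2) := by
          have e1 : (fun ij : Fin n × Fin M => Y ij.1 ij.2 - (X * Γ₀) ij.1 ij.2)
              = fun ij : Fin n × Fin M => Y ij.1 ij.2 - θhat ij := by
            funext ij; rw [hXΓ₀]; rfl
          simp only [hP]
          rw [e1]
      _ ≤ (1 / 2) * sqnorm (fun ij : Fin n × Fin M => Y ij.1 ij.2 - (X * Γhat) ij.1 ij.2)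
          + lam * l1norm (fun ik : Fin n × Fin m => (X * Γhat * D) ik.1 ik.2) := this
      _ = P Γhat := rfl
  have hle2 : P Γhat ≤ P Γ₀ := hΓopt Γ₀
  have hPeq : P Γhat = P Γ₀ := le_antisymm hle2 hle1
  -- midpoint argument: strict convexity of the quadratic part
  set Γmid : Matrix (Fin p) (Fin M) ℝ := (1 / 2 : ℝ) • (Γhat + Γ₀) with hΓmid
  have hmid : ∀ i j, (X * Γmid) i j = ((X * Γhat) i j + (X * Γ₀) i j) / 2 := by
    intro i j
    rw [hΓmid, Matrix.mul_smul, Matrix.mul_add]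
    simp [Matrix.add_apply]
    ring
  have hmidD : ∀ i k, (X * Γmid * D) i k = ((X * Γhat * D) i k + (X * Γ₀ * D) i k) / 2 := by
    intro i k
    rw [hΓmid, Matrix.mul_smul, Matrix.smul_mul, Matrix.mul_add, Matrix.add_mul]
    simp [Matrix.add_apply]
    ring
  set dv : Fin n × Fin M → ℝ := fun ij => (X * Γhat) ij.1 ij.2 - (X * Γ₀) ij.1 ij.2 with hdv
  have hsq : sqnorm (fun ij : Fin n × Fin M => Y ij.1 ij.2 - (X * Γmid) ij.1 ij.2)
      = (1 / 2) * sqnorm (fun ij : Fin n × Fin M => Y ij.1 ij.2 - (X * Γhat) ij.1 ij.2)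
        + (1 / 2) * sqnorm (fun ij : Fin n × Fin M => Y ij.1 ij.2 - (X * Γ₀) ij.1 ij.2)
        - (1 / 4) * sqnorm dv := by
    simp only [sqnorm, Finset.mul_sum, ← Finset.sum_add_distrib, ← Finset.sum_sub_distrib]
    apply Finset.sum_congr rfl
    intro ij _
    rw [hmid ij.1 ij.2, hdv]
    ring
  have hl1 : l1norm (fun ik : Fin n × Fin m => (X * Γmid * D) ik.1 ik.2)
      ≤ (1 / 2) * l1norm (fun ik : Fin n × Fin m => (X * Γhat * D) ik.1 ik.2)
        + (1 / 2) * l1norm (fun ik : Fin n × Fin m => (X * Γ₀ * D) ik.1 ik.2) := by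
    simp only [l1norm, Finset.mul_sum, ← Finset.sum_add_distrib]
    apply Finset.sum_le_sum
    intro ik _
    rw [hmidD ik.1 ik.2]
    rw [abs_div]
    have := abs_add_le ((X * Γhat * D) ik.1 ik.2) ((X * Γ₀ * D) ik.1 ik.2)
    rw [abs_of_pos (by norm_num : (0:ℝ) < 2)]
    linarith
  have hmidineq : P Γmid ≤ (1 / 2) * P Γhat + (1 / 2) * P Γ₀ - (1 / 8) * sqnorm dv := by
    have hll := mul_le_mul_of_nonneg_left hl1 hlam.le
    simp only [hP]
    rw [hsq]
    linarith
  have hPmid : P Γhat ≤ P Γmid := hΓopt Γmid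
  have hdv0 : sqnorm dv ≤ 0 := by
    rw [hPeq] at hPmid hmidineq
    have := hPmid.trans hmidineq
    linarith
  have hXeq : X * Γhat = X * Γ₀ := by
    ext i j
    have hnn : ∀ ij ∈ (Finset.univ : Finset (Fin n × Fin M)), (0:ℝ) ≤ dv ij ^ 2 :=
      fun ij _ => sq_nonneg _
    have hz : sqnorm dv = 0 := le_antisymm hdv0 (Finset.sum_nonneg hnn)
    have := (Finset.sum_eq_zero_iff_of_nonneg hnn).mp hz (i, j) (Finset.mem_univ _)
    have hd : dv (i, j) = 0 := by
      exact pow_eq_zero_iff (two_ne_zero) |>.mp this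
    rw [hdv] at hd
    simpa [sub_eq_zero] using hd
  -- conclude Γhat = Γ₀
  have : Γhat = Γ₀ := by
    calc Γhat = ((Xᵀ * X)⁻¹ * (Xᵀ * X)) * Γhat := by rw [hinv, Matrix.one_mul]
      _ = (Xᵀ * X)⁻¹ * Xᵀ * (X * Γhat) := by
          rw [Matrix.mul_assoc, Matrix.mul_assoc, Matrix.mul_assoc]
      _ = (Xᵀ * X)⁻¹ * Xᵀ * (X * Γ₀) := by rw [hXeq]
      _ = ((Xᵀ * X)⁻¹ * (Xᵀ * X)) * Γ₀ := by
          rw [Matrix.mul_assoc, Matrix.mul_assoc, Matrix.mul_assoc]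
      _ = Γ₀ := by rw [hinv, Matrix.one_mul]
  exact this
end

section
/- Let D ∈ ℝ^{M×m} be the incidence matrix of a graph G with maximal vertex degree d, and let T be a nonempty subset of the edge set. Then the compatibility factor satisfies κ_T ≥ 1/(2·min{√d, √|T|}). -/
open Matrix BigOperators

/-- The compatibility factor of an incidence matrix `D` for a nonempty edge set `T`:
`κ_T = inf { √|T|·‖θ‖ / ‖(Dᵀθ)_T‖₁ : (Dᵀθ)_T ≠ 0 }`. -/
noncomputable def compatFactor {M m : ℕ} (D : Matrix (Fin M) (Fin m) ℝ)
    (T : Finset (Fin m)) : ℝ :=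
  sInf {r : ℝ | ∃ θ : Fin M → ℝ, (∃ j ∈ T, Dᵀ.mulVec θ j ≠ 0) ∧
    r = Real.sqrt T.card * Real.sqrt (sqnorm θ) / (∑ j ∈ T, |Dᵀ.mulVec θ j|)}

/-- Lemma (Hütter–Rigollet): for the incidence matrix of a graph with maximal degree `d`
and a nonempty edge set `T`, the compatibility factor satisfies
`κ_T ≥ 1 / (2 min{√d, √|T|})`. -/
theorem compat_factor_lower_bound {M m : ℕ} (D : Matrix (Fin M) (Fin m) ℝ)
    (hD : IsIncidence D) (d : ℕ)
    (hdeg : ∀ i : Fin M, (Finset.univ.filter fun j : Fin m => D i j ≠ 0).card ≤ d)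
    (T : Finset (Fin m)) (hT : T.Nonempty) :
    1 / (2 * min (Real.sqrt d) (Real.sqrt T.card)) ≤ compatFactor D T := by
  classical
  obtain ⟨j₀, hj₀T⟩ := hT
  obtain ⟨a₁, a₂, hane, ha1, ha2, ha0⟩ := hD j₀
  have hd1 : 1 ≤ d := by
    refine le_trans ?_ (hdeg a₁)
    have : j₀ ∈ Finset.univ.filter fun j : Fin m => D a₁ j ≠ 0 := by
      simp [ha1]
    exact Finset.card_pos.mpr ⟨j₀, this⟩
  have hT1 : 1 ≤ T.card := Finset.card_pos.mpr ⟨j₀, hj₀T⟩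
  have hmin : 0 < min (Real.sqrt d) (Real.sqrt T.card) := by
    apply lt_min
    · exact Real.sqrt_pos.mpr (by exact_mod_cast hd1)
    · exact Real.sqrt_pos.mpr (by exact_mod_cast hT1)
  apply le_csInf
  · refine ⟨_, fun i => if i = a₁ then (1:ℝ) else 0, ⟨j₀, hj₀T, ?_⟩, rfl⟩
    have : Dᵀ.mulVec (fun i => if i = a₁ then (1:ℝ) else 0) j₀ = 1 := by
      simp [Matrix.mulVec, dotProduct, mul_ite, ha1]
    rw [this]; norm_num
  · rintro r ⟨θ, ⟨j₁, hj₁T, hj₁⟩, rfl⟩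
    set v := Dᵀ.mulVec θ with hvdef
    have hv : ∀ j, v j = ∑ i, D i j * θ i := by
      intro j
      simp [hvdef, Matrix.mulVec, dotProduct, Matrix.transpose_apply]
    set W : Fin M → Fin m → ℝ := fun i j => if D i j = 0 then 0 else 1 with hW
    have hbound : ∀ j, |v j| ≤ ∑ i, W i j * |θ i| := by
      intro j
      obtain ⟨i₁, i₂, hne, h1, h2, h0⟩ := hD j
      have hsub : ({i₁, i₂} : Finset (Fin M)) ⊆ Finset.univ := Finset.subset_univ _
      have hv' : v j = θ i₁ - θ i₂ := by
        rw [hv, ← Finset.sum_subset hsub (fun i _ hi => ?_)]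
        · rw [Finset.sum_pair hne, h1, h2]; ring
        · have hi1 : i ≠ i₁ := fun h => hi (by simp [h])
          have hi2 : i ≠ i₂ := fun h => hi (by simp [h])
          rw [h0 i hi1 hi2, zero_mul]
      have hrhs : ∑ i, W i j * |θ i| = |θ i₁| + |θ i₂| := by
        rw [← Finset.sum_subset hsub (fun i _ hi => ?_)]
        · rw [Finset.sum_pair hne]
          have w1 : W i₁ j = 1 := by simp [hW, h1]
          have w2 : W i₂ j = 1 := by simp [hW, h2]
          rw [w1, w2]; ring
        · have hi1 : i ≠ i₁ := fun h => hi (by simp [h])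
          have hi2 : i ≠ i₂ := fun h => hi (by simp [h])
          simp [hW, h0 i hi1 hi2]
      rw [hv', hrhs]
      exact abs_sub _ _
    set c : Fin M → ℝ := fun i => ∑ j ∈ T, W i j with hc
    have hcnn : ∀ i, 0 ≤ c i := by
      intro i
      apply Finset.sum_nonneg
      intro j _
      simp only [hW]
      split <;> norm_num
    have hccard : ∀ i, c i = ((T.filter fun j => D i j ≠ 0).card : ℝ) := by
      intro i
      simp only [hc, hW]
      rw [Finset.sum_ite, Finset.sum_const, Finset.sum_const]
      simp [Finset.filter_not]
    have hcle : ∀ i, c i ≤ min (d : ℝ) (T.card : ℝ) := by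
      intro i
      rw [hccard]
      apply le_min
      · have h1 : (T.filter fun j => D i j ≠ 0).card ≤
            (Finset.univ.filter fun j : Fin m => D i j ≠ 0).card :=
          Finset.card_le_card (Finset.filter_subset_filter _ (Finset.subset_univ T))
        exact_mod_cast h1.trans (hdeg i)
      · exact_mod_cast Finset.card_filter_le T _
    have hcsum : ∑ i, c i = 2 * (T.card : ℝ) := by
      simp only [hc]
      rw [Finset.sum_comm]
      have h2 : ∀ j ∈ T, ∑ i, W i j = 2 := by
        intro j _
        obtain ⟨i₁, i₂, hne, h1, h2, h0⟩ := hD j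
        have hsub : ({i₁, i₂} : Finset (Fin M)) ⊆ Finset.univ := Finset.subset_univ _
        rw [← Finset.sum_subset hsub (fun i _ hi => ?_)]
        · rw [Finset.sum_pair hne]
          have w1 : W i₁ j = 1 := by simp [hW, h1]
          have w2 : W i₂ j = 1 := by simp [hW, h2]
          rw [w1, w2]; norm_num
        · have hi1 : i ≠ i₁ := fun h => hi (by simp [h])
          have hi2 : i ≠ i₂ := fun h => hi (by simp [h])
          simp [hW, h0 i hi1 hi2]
      rw [Finset.sum_congr rfl h2, Finset.sum_const, nsmul_eq_mul]
      ring
    have hS1 : ∑ j ∈ T, |v j| ≤ ∑ i, c i * |θ i| := by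
      calc ∑ j ∈ T, |v j| ≤ ∑ j ∈ T, ∑ i, W i j * |θ i| :=
            Finset.sum_le_sum fun j _ => hbound j
        _ = ∑ i, ∑ j ∈ T, W i j * |θ i| := Finset.sum_comm
        _ = ∑ i, c i * |θ i| := by
            apply Finset.sum_congr rfl
            intro i _
            rw [hc, Finset.sum_mul]
    have hQnn : 0 ≤ sqnorm θ := Finset.sum_nonneg fun i _ => sq_nonneg _
    have hCS : (∑ i, c i * |θ i|) ^ 2 ≤ (∑ i, c i ^ 2) * sqnorm θ := by
      have h := Finset.sum_mul_sq_le_sq_mul_sq Finset.univ c (fun i => |θ i|)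
      have habs : ∑ i, |θ i| ^ 2 = sqnorm θ := by
        simp [sqnorm, sq_abs]
      rw [← habs]
      exact h
    have hcsq : ∑ i, c i ^ 2 ≤ min (d : ℝ) (T.card : ℝ) * (2 * (T.card : ℝ)) := by
      rw [← hcsum, Finset.mul_sum]
      apply Finset.sum_le_sum
      intro i _
      rw [sq]
      exact mul_le_mul_of_nonneg_right (hcle i) (hcnn i)
    set K := min (Real.sqrt d) (Real.sqrt T.card) with hK
    have hKmin : K = Real.sqrt (min (d : ℝ) (T.card : ℝ)) := by
      rcases le_total (d : ℝ) (T.card : ℝ) with h | h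
      · rw [min_eq_left h, hK, min_eq_left (Real.sqrt_le_sqrt h)]
      · rw [min_eq_right h, hK, min_eq_right (Real.sqrt_le_sqrt h)]
    have hminnn : (0:ℝ) ≤ min (d : ℝ) (T.card : ℝ) := le_min (by positivity) (by positivity)
    -- key: ∑ c|θ| ≤ 2 K √T √Q
    have hkey : ∑ i, c i * |θ i| ≤
        2 * K * Real.sqrt T.card * Real.sqrt (sqnorm θ) := by
      have hlnn : 0 ≤ ∑ i, c i * |θ i| :=
        Finset.sum_nonneg fun i _ => mul_nonneg (hcnn i) (abs_nonneg _)
      have hrnn : 0 ≤ 2 * K * Real.sqrt T.card * Real.sqrt (sqnorm θ) := by positivity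
      have hsq : (∑ i, c i * |θ i|) ^ 2 ≤
          (2 * K * Real.sqrt T.card * Real.sqrt (sqnorm θ)) ^ 2 := by
        have hr : (2 * K * Real.sqrt T.card * Real.sqrt (sqnorm θ)) ^ 2 =
            4 * (min (d : ℝ) (T.card : ℝ)) * (T.card : ℝ) * sqnorm θ := by
          rw [hKmin]
          have e1 : Real.sqrt (min (d : ℝ) (T.card : ℝ)) ^ 2 = min (d : ℝ) (T.card : ℝ) :=
            Real.sq_sqrt hminnn
          have e2 : Real.sqrt (T.card : ℝ) ^ 2 = (T.card : ℝ) := Real.sq_sqrt (by positivity)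
          have e3 : Real.sqrt (sqnorm θ) ^ 2 = sqnorm θ := Real.sq_sqrt hQnn
          calc (2 * Real.sqrt (min (d : ℝ) (T.card : ℝ)) * Real.sqrt (T.card : ℝ) *
                Real.sqrt (sqnorm θ)) ^ 2
              = 4 * Real.sqrt (min (d : ℝ) (T.card : ℝ)) ^ 2 * Real.sqrt (T.card : ℝ) ^ 2 *
                Real.sqrt (sqnorm θ) ^ 2 := by ring
            _ = 4 * (min (d : ℝ) (T.card : ℝ)) * (T.card : ℝ) * sqnorm θ := by
                rw [e1, e2, e3]
        rw [hr]
        calc (∑ i, c i * |θ i|) ^ 2 ≤ (∑ i, c i ^ 2) * sqnorm θ := hCS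
          _ ≤ (min (d : ℝ) (T.card : ℝ) * (2 * (T.card : ℝ))) * sqnorm θ :=
              mul_le_mul_of_nonneg_right hcsq hQnn
          _ ≤ 4 * (min (d : ℝ) (T.card : ℝ)) * (T.card : ℝ) * sqnorm θ := by
              nlinarith [hminnn, hQnn, Nat.cast_nonneg (α := ℝ) T.card]
      calc ∑ i, c i * |θ i| = Real.sqrt ((∑ i, c i * |θ i|) ^ 2) := (Real.sqrt_sq hlnn).symm
        _ ≤ Real.sqrt ((2 * K * Real.sqrt T.card * Real.sqrt (sqnorm θ)) ^ 2) :=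
            Real.sqrt_le_sqrt hsq
        _ = 2 * K * Real.sqrt T.card * Real.sqrt (sqnorm θ) := Real.sqrt_sq hrnn
    have hSpos : 0 < ∑ j ∈ T, |v j| := by
      apply Finset.sum_pos' (fun j _ => abs_nonneg _)
      exact ⟨j₁, hj₁T, abs_pos.mpr hj₁⟩
    rw [div_le_div_iff₀ (by positivity) hSpos]
    have := hS1.trans hkey
    nlinarith [this]
end
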